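/- For all n ≥ 1 and x ∈ (0,1), Σ_{k=0}^{n} |1 − T_{n,k}(x)/n|·P_{n,k}(x) ≤ √3. Consequently the modified Goodman–Sharma operator Ũ_n satisfies ‖Ũ_n f‖_∞ ≤ √3·‖f‖_∞ for every f ∈ C[0,1]. -/

import Mathlib

/-- Bernstein basis polynomial `P_{n,k}(x) = C(n,k) x^k (1-x)^{n-k}`. -/
noncomputable def bern (n k : ℕ) (x : ℝ) : ℝ :=
  (n.choose k : ℝ) * x ^ k * (1 - x) ^ (n - k)

/-- `T_{n,k}(x) = k(k-1)(1-x)/x - 2k(n-k) + (n-k)(n-k-1)x/(1-x)`. -/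
noncomputable def T (n k : ℕ) (x : ℝ) : ℝ :=
  (k : ℝ) * ((k : ℝ) - 1) * (1 - x) / x - 2 * (k : ℝ) * ((n : ℝ) - (k : ℝ))
    + ((n : ℝ) - (k : ℝ)) * ((n : ℝ) - (k : ℝ) - 1) * x / (1 - x)

/-- Goodman–Sharma functionals `u_{n,k}(f)`. -/
noncomputable def uGS (n k : ℕ) (f : ℝ → ℝ) : ℝ :=
  if k = 0 then f 0
  else if k = n then f 1
  else ((n : ℝ) - 1) * ∫ t in (0:ℝ)..1, bern (n - 2) (k - 1) t * f t

/-- The modified Goodman–Sharma operator `Ũ_n`. -/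
noncomputable def modGS (n : ℕ) (f : ℝ → ℝ) (x : ℝ) : ℝ :=
  ∑ k ∈ Finset.range (n + 1), uGS n k f * ((1 - T n k x / n) * bern n k x)

open Finset Polynomial intervalIntegral

lemma bern_nonneg (n k : ℕ) {x : ℝ} (h0 : 0 ≤ x) (h1 : x ≤ 1) : 0 ≤ bern n k x := by
  unfold bern
  have : (0:ℝ) ≤ 1 - x := by linarith
  positivity

lemma sum_bern (n : ℕ) (x : ℝ) : ∑ k ∈ Finset.range (n+1), bern n k x = 1 := by
  have h := add_pow x (1 - x) n
  simp only [add_sub_cancel, one_pow] at h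
  rw [show (1:ℝ) = (x + (1-x))^n by rw [add_sub_cancel]; simp, add_pow]
  exact Finset.sum_congr rfl fun k _ => by unfold bern; ring

lemma bern_step (m i : ℕ) (x : ℝ) :
    ((i+1 : ℕ) : ℝ) * bern (m+1) (i+1) x = ((m+1 : ℕ) : ℝ) * (x * bern m i x) := by
  unfold bern
  have hc : ((m+1) * (m.choose i) : ℕ) = ((m+1).choose (i+1)) * (i+1) :=
    Nat.add_one_mul_choose_eq m i
  have hc' : ((m+1 : ℕ) : ℝ) * (m.choose i : ℝ)
      = (((m+1).choose (i+1) : ℕ) : ℝ) * ((i+1 : ℕ) : ℝ) := by exact_mod_cast hc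
  have he : m + 1 - (i + 1) = m - i := by omega
  rw [he, pow_succ]
  push_cast at hc' ⊢
  linear_combination (-(x ^ i * x * (1 - x) ^ (m - i))) * hc'

lemma momE (j : ℕ) : ∀ (n : ℕ) (x : ℝ),
    ∑ k ∈ Finset.range (n+1), (descPochhammer ℝ j).eval (k:ℝ) * bern n k x
      = (descPochhammer ℝ j).eval (n:ℝ) * x^j := by
  induction j with
  | zero => intro n x; simpa [descPochhammer_zero] using sum_bern n x
  | succ j ih =>
    have ev : ∀ t : ℝ, (descPochhammer ℝ (j+1)).eval t
        = t * (descPochhammer ℝ j).eval (t - 1) := by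
      intro t
      rw [descPochhammer_succ_left]
      simp [Polynomial.eval_comp]
    intro n x
    cases n with
    | zero => simp [ev]
    | succ m =>
      rw [Finset.sum_range_succ']
      have step : ∀ i : ℕ,
          (descPochhammer ℝ (j+1)).eval ((i+1 : ℕ):ℝ) * bern (m+1) (i+1) x
            = ((m+1 : ℕ):ℝ) * x * ((descPochhammer ℝ j).eval (i:ℝ) * bern m i x) := by
        intro i
        rw [ev]
        have : ((i+1 : ℕ):ℝ) - 1 = (i:ℝ) := by push_cast; ring
        rw [this]
        have hb := bern_step m i x
        push_cast at hb ⊢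
        linear_combination (descPochhammer ℝ j).eval (i:ℝ) * hb
      calc (∑ i ∈ Finset.range (m+1),
              (descPochhammer ℝ (j+1)).eval ((i+1 : ℕ):ℝ) * bern (m+1) (i+1) x)
            + (descPochhammer ℝ (j+1)).eval ((0:ℕ):ℝ) * bern (m+1) 0 x
          = (∑ i ∈ Finset.range (m+1),
              ((m+1 : ℕ):ℝ) * x * ((descPochhammer ℝ j).eval (i:ℝ) * bern m i x)) + 0 := by
            rw [Finset.sum_congr rfl fun i _ => step i]
            simp [ev]
        _ = ((m+1 : ℕ):ℝ) * x * ((descPochhammer ℝ j).eval (m:ℝ) * x^j) := by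
            rw [add_zero, ← Finset.mul_sum, ih m x]
        _ = (descPochhammer ℝ (j+1)).eval ((m+1 : ℕ):ℝ) * x^(j+1) := by
            rw [ev]
            have : ((m+1 : ℕ):ℝ) - 1 = (m:ℝ) := by push_cast; ring
            rw [this, pow_succ]
            ring

lemma dp_eval_one (t : ℝ) : (descPochhammer ℝ 1).eval t = t := by
  simp [descPochhammer_one]

lemma dp_eval_two (t : ℝ) : (descPochhammer ℝ 2).eval t = t * (t - 1) := by
  rw [show (2:ℕ) = 1 + 1 from rfl, descPochhammer_succ_eval, dp_eval_one]
  norm_num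

lemma dp_eval_three (t : ℝ) : (descPochhammer ℝ 3).eval t = t * (t - 1) * (t - 2) := by
  rw [show (3:ℕ) = 2 + 1 from rfl, descPochhammer_succ_eval, dp_eval_two]
  norm_num

lemma dp_eval_four (t : ℝ) : (descPochhammer ℝ 4).eval t = t * (t - 1) * (t - 2) * (t - 3) := by
  rw [show (4:ℕ) = 3 + 1 from rfl, descPochhammer_succ_eval, dp_eval_three]
  norm_num

lemma S1 (n : ℕ) (x : ℝ) :
    ∑ k ∈ Finset.range (n+1), (k:ℝ) * bern n k x = (n:ℝ) * x := by
  have h := momE 1 n x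
  simpa [dp_eval_one] using h

lemma S2 (n : ℕ) (x : ℝ) :
    ∑ k ∈ Finset.range (n+1), (k:ℝ)^2 * bern n k x
      = (n:ℝ)*((n:ℝ)-1)*x^2 + (n:ℝ)*x := by
  have h2 := momE 2 n x
  simp only [dp_eval_two] at h2
  have h1 := S1 n x
  calc ∑ k ∈ Finset.range (n+1), (k:ℝ)^2 * bern n k x
      = ∑ k ∈ Finset.range (n+1),
          ((k:ℝ) * ((k:ℝ) - 1) * bern n k x + (k:ℝ) * bern n k x) :=
        Finset.sum_congr rfl fun k _ => by ring
    _ = (n:ℝ)*((n:ℝ)-1)*x^2 + (n:ℝ)*x := by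
        rw [Finset.sum_add_distrib, h2, h1]

lemma S3 (n : ℕ) (x : ℝ) :
    ∑ k ∈ Finset.range (n+1), (k:ℝ)^3 * bern n k x
      = (n:ℝ)*((n:ℝ)-1)*((n:ℝ)-2)*x^3 + 3*(n:ℝ)*((n:ℝ)-1)*x^2 + (n:ℝ)*x := by
  have h3 := momE 3 n x
  simp only [dp_eval_three] at h3
  have h2 := momE 2 n x
  simp only [dp_eval_two] at h2
  have h1 := S1 n x
  calc ∑ k ∈ Finset.range (n+1), (k:ℝ)^3 * bern n k x
      = ∑ k ∈ Finset.range (n+1),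
          ((k:ℝ) * ((k:ℝ) - 1) * ((k:ℝ) - 2) * bern n k x
            + (3 * ((k:ℝ) * ((k:ℝ) - 1) * bern n k x) + (k:ℝ) * bern n k x)) :=
        Finset.sum_congr rfl fun k _ => by ring
    _ = (n:ℝ)*((n:ℝ)-1)*((n:ℝ)-2)*x^3 + 3*(n:ℝ)*((n:ℝ)-1)*x^2 + (n:ℝ)*x := by
        rw [Finset.sum_add_distrib, Finset.sum_add_distrib, ← Finset.mul_sum, h3, h2, h1]
        ring

lemma S4 (n : ℕ) (x : ℝ) :
    ∑ k ∈ Finset.range (n+1), (k:ℝ)^4 * bern n k x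
      = (n:ℝ)*((n:ℝ)-1)*((n:ℝ)-2)*((n:ℝ)-3)*x^4 + 6*(n:ℝ)*((n:ℝ)-1)*((n:ℝ)-2)*x^3
          + 7*(n:ℝ)*((n:ℝ)-1)*x^2 + (n:ℝ)*x := by
  have h4 := momE 4 n x
  simp only [dp_eval_four] at h4
  have h3 := momE 3 n x
  simp only [dp_eval_three] at h3
  have h2 := momE 2 n x
  simp only [dp_eval_two] at h2
  have h1 := S1 n x
  calc ∑ k ∈ Finset.range (n+1), (k:ℝ)^4 * bern n k x
      = ∑ k ∈ Finset.range (n+1),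
          ((k:ℝ) * ((k:ℝ) - 1) * ((k:ℝ) - 2) * ((k:ℝ) - 3) * bern n k x
            + (6 * ((k:ℝ) * ((k:ℝ) - 1) * ((k:ℝ) - 2) * bern n k x)
              + (7 * ((k:ℝ) * ((k:ℝ) - 1) * bern n k x) + (k:ℝ) * bern n k x))) :=
        Finset.sum_congr rfl fun k _ => by ring
    _ = _ := by
        rw [Finset.sum_add_distrib, Finset.sum_add_distrib, Finset.sum_add_distrib,
          ← Finset.mul_sum, ← Finset.mul_sum, h4, h3, h2, h1]
        ring

/-- Key polynomial identity: the second moment of `g(k) = 2nq + z(1-2x) - z²`. -/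
lemma keyId (n : ℕ) (x : ℝ) :
    ∑ k ∈ Finset.range (n+1),
        (2*(n:ℝ)*x*(1-x) + ((k:ℝ) - n*x)*(1-2*x) - ((k:ℝ) - n*x)^2)^2 * bern n k x
      = 3*(n:ℝ)^2*x^2*(1-x)^2 - 2*(n:ℝ)*x^2*(1-x)^2 := by
  have h0 := sum_bern n x
  have h1 := S1 n x
  have h2 := S2 n x
  have h3 := S3 n x
  have h4 := S4 n x
  calc ∑ k ∈ Finset.range (n+1),
        (2*(n:ℝ)*x*(1-x) + ((k:ℝ) - n*x)*(1-2*x) - ((k:ℝ) - n*x)^2)^2 * bern n k x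
      = ∑ k ∈ Finset.range (n+1),
          (1 * ((k:ℝ)^4 * bern n k x)
            + ((-2 + 4*x - 4*(n:ℝ)*x) * ((k:ℝ)^3 * bern n k x)
            + ((1 - 4*x + 4*x^2 + 2*(n:ℝ)*x - 8*(n:ℝ)*x^2 + 6*(n:ℝ)^2*x^2) * ((k:ℝ)^2 * bern n k x)
            + ((2*(n:ℝ)*x - 4*(n:ℝ)*x^2 + 2*(n:ℝ)^2*x^2 + 4*(n:ℝ)^2*x^3 - 4*(n:ℝ)^3*x^3)
                  * ((k:ℝ) * bern n k x)
            + ((n:ℝ)^2*x^2 - 2*(n:ℝ)^3*x^3 + (n:ℝ)^4*x^4) * bern n k x)))) :=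
        Finset.sum_congr rfl fun k _ => by ring
    _ = 3*(n:ℝ)^2*x^2*(1-x)^2 - 2*(n:ℝ)*x^2*(1-x)^2 := by
        rw [Finset.sum_add_distrib, Finset.sum_add_distrib, Finset.sum_add_distrib,
          Finset.sum_add_distrib, ← Finset.mul_sum, ← Finset.mul_sum, ← Finset.mul_sum,
          ← Finset.mul_sum, ← Finset.mul_sum, h0, h1, h2, h3, h4]
        ring

lemma part1 (n : ℕ) (hn : 1 ≤ n) {x : ℝ} (hx : x ∈ Set.Ioo (0:ℝ) 1) :
    ∑ k ∈ Finset.range (n+1), |1 - T n k x / n| * bern n k x ≤ Real.sqrt 3 := by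
  obtain ⟨hx0, hx1⟩ := hx
  have h1x : (0:ℝ) < 1 - x := by linarith
  have hnR : (0:ℝ) < (n:ℝ) := by exact_mod_cast hn
  have hA : ∀ k : ℕ, 1 - T n k x / n
      = (2*(n:ℝ)*x*(1-x) + ((k:ℝ) - n*x)*(1-2*x) - ((k:ℝ) - n*x)^2)
          / ((n:ℝ)*(x*(1-x))) := by
    intro k
    unfold T
    field_simp
    ring
  have hsq : ∑ k ∈ Finset.range (n+1), (1 - T n k x / n)^2 * bern n k x
      = 3 - 2/(n:ℝ) := by
    calc ∑ k ∈ Finset.range (n+1), (1 - T n k x / n)^2 * bern n k x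
        = ∑ k ∈ Finset.range (n+1),
            (2*(n:ℝ)*x*(1-x) + ((k:ℝ) - n*x)*(1-2*x) - ((k:ℝ) - n*x)^2)^2 * bern n k x
              / ((n:ℝ)*(x*(1-x)))^2 :=
          Finset.sum_congr rfl fun k _ => by rw [hA k, div_pow, div_mul_eq_mul_div]
      _ = (∑ k ∈ Finset.range (n+1),
            (2*(n:ℝ)*x*(1-x) + ((k:ℝ) - n*x)*(1-2*x) - ((k:ℝ) - n*x)^2)^2 * bern n k x)
              / ((n:ℝ)*(x*(1-x)))^2 := by rw [Finset.sum_div]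
      _ = (3*(n:ℝ)^2*x^2*(1-x)^2 - 2*(n:ℝ)*x^2*(1-x)^2) / ((n:ℝ)*(x*(1-x)))^2 := by
          rw [keyId]
      _ = 3 - 2/(n:ℝ) := by field_simp
  have hbpos : ∀ k ∈ Finset.range (n+1), (0:ℝ) ≤ bern n k x :=
    fun k _ => bern_nonneg n k hx0.le hx1.le
  have hCS := Finset.sum_sq_le_sum_mul_sum_of_sq_eq_mul (Finset.range (n+1))
    (r := fun k => |1 - T n k x / n| * bern n k x)
    (f := fun k => (1 - T n k x / n)^2 * bern n k x)
    (g := fun k => bern n k x)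
    (fun k hk => mul_nonneg (sq_nonneg _) (hbpos k hk))
    (fun k hk => hbpos k hk)
    (fun k hk => by
      show (|1 - T n k x / n| * bern n k x)^2
        = ((1 - T n k x / n)^2 * bern n k x) * bern n k x
      rw [mul_pow, sq_abs]
      ring)
  rw [hsq, sum_bern, mul_one] at hCS
  have hnonneg : (0:ℝ) ≤ ∑ k ∈ Finset.range (n+1), |1 - T n k x / n| * bern n k x :=
    Finset.sum_nonneg fun k hk => mul_nonneg (abs_nonneg _) (hbpos k hk)
  have h2n : (0:ℝ) < 2/(n:ℝ) := by positivity
  exact Real.le_sqrt_of_sq_le (by linarith)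

lemma J (b : ℕ) : ∀ a : ℕ, ∫ x in (0:ℝ)..1, x^a * (1-x)^b
    = (a.factorial * b.factorial : ℝ) / (a+b+1).factorial := by
  induction b with
  | zero =>
    intro a
    simp only [pow_zero, mul_one, Nat.add_zero, Nat.factorial_zero, Nat.cast_one]
    rw [integral_pow, Nat.factorial_succ]
    have h1 : (a.factorial : ℝ) ≠ 0 := by exact_mod_cast a.factorial_ne_zero
    rw [one_pow, zero_pow (by omega : a + 1 ≠ 0)]
    push_cast
    field_simp
    norm_num
  | succ b ih =>
    intro a
    have hu : ∀ y ∈ Set.uIcc (0:ℝ) 1, HasDerivAt (fun x : ℝ => (1-x)^(b+1))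
        (-(((b:ℝ)+1) * (1-y)^b)) y := by
      intro y _
      have h0 : HasDerivAt (fun x : ℝ => 1 - x) (-1) y := (hasDerivAt_id y).const_sub 1
      have := (hasDerivAt_pow (b+1) (1-y)).comp y h0
      simpa [Function.comp_def] using this
    have hv : ∀ y ∈ Set.uIcc (0:ℝ) 1, HasDerivAt (fun x : ℝ => x^(a+1))
        (((a:ℝ)+1) * y^a) y := by
      intro y _
      have := hasDerivAt_pow (a+1) y
      simpa using this
    have hcu : Continuous fun y : ℝ => -(((b:ℝ)+1) * (1-y)^b) := by fun_prop
    have hcv : Continuous fun y : ℝ => ((a:ℝ)+1) * y^a := by fun_prop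
    have hu' : IntervalIntegrable (fun y : ℝ => -(((b:ℝ)+1) * (1-y)^b)) MeasureTheory.volume 0 1 :=
      hcu.intervalIntegrable 0 1
    have hv' : IntervalIntegrable (fun y : ℝ => ((a:ℝ)+1) * y^a) MeasureTheory.volume 0 1 :=
      hcv.intervalIntegrable 0 1
    have hparts := intervalIntegral.integral_mul_deriv_eq_deriv_mul hu hv hu' hv'
    have e1 : ∀ x : ℝ, (1-x)^(b+1) * (((a:ℝ)+1) * x^a) = ((a:ℝ)+1) * (x^a * (1-x)^(b+1)) :=
      fun x => by ring
    have e2 : ∀ x : ℝ, -(((b:ℝ)+1) * (1-x)^b) * x^(a+1)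
        = -(((b:ℝ)+1) * (x^(a+1) * (1-x)^b)) := fun x => by ring
    simp only [e1, e2] at hparts
    rw [intervalIntegral.integral_neg, intervalIntegral.integral_const_mul,
      intervalIntegral.integral_const_mul, ih (a+1)] at hparts
    simp only [sub_self, one_pow, zero_pow, sub_zero] at hparts
    have hAB : (a + 1 + b + 1 : ℕ) = a + (b+1) + 1 := by omega
    have key : ((a:ℝ)+1) * (∫ x in (0:ℝ)..1, x^a * (1-x)^(b+1))
        = ((b:ℝ)+1) * (((a+1).factorial * b.factorial : ℝ) / (a+1+b+1).factorial) := by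
      rw [hparts]
      norm_num
    have hfa : ((a+1+b+1).factorial : ℝ) ≠ 0 := by
      exact_mod_cast (a+1+b+1).factorial_ne_zero
    have ha1 : ((a:ℝ)+1) ≠ 0 := by positivity
    have : (∫ x in (0:ℝ)..1, x^a * (1-x)^(b+1))
        = ((b:ℝ)+1) * (((a+1).factorial * b.factorial : ℝ) / (a+1+b+1).factorial) / ((a:ℝ)+1) := by
      field_simp at key ⊢
      linarith [key]
    rw [this]
    rw [show a + (b+1) + 1 = a+1+b+1 by omega]
    rw [Nat.factorial_succ a, Nat.factorial_succ b]
    push_cast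
    field_simp

lemma integral_bern (m i : ℕ) (him : i ≤ m) :
    ∫ t in (0:ℝ)..1, bern m i t = 1/((m:ℝ)+1) := by
  unfold bern
  have e : ∀ t : ℝ, ((m.choose i : ℕ) : ℝ) * t^i * (1-t)^(m-i)
      = ((m.choose i : ℕ) : ℝ) * (t^i * (1-t)^(m-i)) := fun t => by ring
  simp only [e]
  rw [intervalIntegral.integral_const_mul, J (m-i) i]
  have hmi : i + (m - i) + 1 = m + 1 := by omega
  rw [hmi]
  have hch : (m.choose i) * (i.factorial * (m-i).factorial) = m.factorial := by
    rw [← Nat.choose_mul_factorial_mul_factorial him]; ring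
  have hch' : ((m.choose i : ℕ) : ℝ) * ((i.factorial : ℝ) * ((m-i).factorial : ℝ))
      = (m.factorial : ℝ) := by exact_mod_cast hch
  rw [Nat.factorial_succ]
  have h1 : ((m.factorial : ℕ) : ℝ) ≠ 0 := by exact_mod_cast m.factorial_ne_zero
  have h2 : ((m:ℝ)+1) ≠ 0 := by positivity
  push_cast at hch' ⊢
  field_simp
  nlinarith [hch']

lemma uGS_bound (n k : ℕ) (hk : k ≤ n) (hn : 1 ≤ n) (f : ℝ → ℝ)
    (hf : ContinuousOn f (Set.Icc (0:ℝ) 1)) (M : ℝ)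
    (hM : ∀ t ∈ Set.Icc (0:ℝ) 1, |f t| ≤ M) : |uGS n k f| ≤ M := by
  unfold uGS
  split_ifs with h0 hns
  · exact hM 0 (by norm_num)
  · exact hM 1 (by norm_num)
  · have hn2 : 2 ≤ n := by omega
    have him : k - 1 ≤ n - 2 := by omega
    set m := n - 2 with hm
    set i := k - 1 with hi
    have hmn : ((m:ℝ)+1) = (n:ℝ) - 1 := by
      have : (m:ℝ) = (n:ℝ) - 2 := by
        rw [hm]; push_cast [Nat.cast_sub hn2]; ring
      rw [this]; ring
    have hb_cont : Continuous fun t : ℝ => bern m i t := by unfold bern; fun_prop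
    have hfi : IntervalIntegrable f MeasureTheory.volume 0 1 := by
      apply ContinuousOn.intervalIntegrable
      rwa [Set.uIcc_of_le (by norm_num : (0:ℝ) ≤ 1)]
    have hgi : IntervalIntegrable (fun t => bern m i t * f t) MeasureTheory.volume 0 1 := by
      apply ContinuousOn.intervalIntegrable
      rw [Set.uIcc_of_le (by norm_num : (0:ℝ) ≤ 1)]
      exact (hb_cont.continuousOn).mul hf
    have hM0 : 0 ≤ M := le_trans (abs_nonneg _) (hM 0 (by norm_num))
    have habs : |∫ t in (0:ℝ)..1, bern m i t * f t|
        ≤ ∫ t in (0:ℝ)..1, |bern m i t * f t| :=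
      intervalIntegral.abs_integral_le_integral_abs (by norm_num)
    have hmono : (∫ t in (0:ℝ)..1, |bern m i t * f t|)
        ≤ ∫ t in (0:ℝ)..1, bern m i t * M := by
      apply intervalIntegral.integral_mono_on (by norm_num) hgi.abs
        ((hb_cont.mul continuous_const).intervalIntegrable 0 1)
      intro t ht
      rw [abs_mul, abs_of_nonneg (bern_nonneg m i ht.1 ht.2)]
      exact mul_le_mul_of_nonneg_left (hM t ht) (bern_nonneg m i ht.1 ht.2)
    have hval : (∫ t in (0:ℝ)..1, bern m i t * M) = M / ((m:ℝ)+1) := by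
      rw [intervalIntegral.integral_mul_const, integral_bern m i him]
      ring
    have hI : |∫ t in (0:ℝ)..1, bern m i t * f t| ≤ M / ((m:ℝ)+1) := by
      rw [← hval]; exact habs.trans hmono
    have hpos : (0:ℝ) < (m:ℝ) + 1 := by positivity
    rw [abs_mul]
    have hn1 : |(n:ℝ) - 1| = (m:ℝ) + 1 := by
      rw [← hmn]; exact abs_of_nonneg (by positivity)
    rw [hn1]
    calc ((m:ℝ)+1) * |∫ t in (0:ℝ)..1, bern m i t * f t|
        ≤ ((m:ℝ)+1) * (M / ((m:ℝ)+1)) := by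
          exact mul_le_mul_of_nonneg_left hI hpos.le
      _ = M := by field_simp

lemma modGS_zero (n : ℕ) (f : ℝ → ℝ) : modGS n f 0 = f 0 := by
  unfold modGS
  rw [Finset.sum_eq_single 0]
  · simp [uGS, T, bern]
  · intro k _ hk
    have : bern n k 0 = 0 := by
      unfold bern
      simp [zero_pow hk]
    simp [this]
  · intro h; simp at h

lemma modGS_one (n : ℕ) (hn : 1 ≤ n) (f : ℝ → ℝ) : modGS n f 1 = f 1 := by
  unfold modGS
  rw [Finset.sum_eq_single n]
  · have hb : bern n n 1 = 1 := by simp [bern]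
    have hT : T n n 1 = 0 := by simp [T]
    have hu : uGS n n f = f 1 := by
      unfold uGS
      rw [if_neg (by omega), if_pos rfl]
    rw [hb, hT, hu]; simp
  · intro k hk hkn
    have hkn' : k < n := by
      have := Finset.mem_range.mp hk; omega
    have : bern n k 1 = 0 := by
      unfold bern
      have : n - k ≠ 0 := by omega
      simp [this]
    simp [this]
  · intro h; exfalso; exact h (Finset.self_mem_range_succ n)

theorem modGS_norm_bound (n : ℕ) (hn : 1 ≤ n) :
    (∀ x ∈ Set.Ioo (0:ℝ) 1,
      ∑ k ∈ Finset.range (n + 1), |1 - T n k x / n| * bern n k x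
        ≤ Real.sqrt 3) ∧
    ∀ f : ℝ → ℝ, ContinuousOn f (Set.Icc (0:ℝ) 1) →
      ∀ x ∈ Set.Icc (0:ℝ) 1,
        |modGS n f x| ≤ Real.sqrt 3 * ⨆ t : Set.Icc (0:ℝ) 1, |f t| := by
  constructor
  · intro x hx
    exact part1 n hn hx
  · intro f hf x hx
    set M := ⨆ t : Set.Icc (0:ℝ) 1, |f t| with hMdef
    have hBdd : BddAbove (Set.range fun t : Set.Icc (0:ℝ) 1 => |f t|) := by
      obtain ⟨C, hC⟩ := (isCompact_Icc (a := (0:ℝ)) (b := 1)).exists_bound_of_continuousOn hf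
      refine ⟨C, ?_⟩
      rintro y ⟨t, rfl⟩
      simpa using hC t t.2
    have hM : ∀ t ∈ Set.Icc (0:ℝ) 1, |f t| ≤ M :=
      fun t ht => le_ciSup hBdd (⟨t, ht⟩ : Set.Icc (0:ℝ) 1)
    have hM0 : 0 ≤ M := le_trans (abs_nonneg _) (hM 0 (by norm_num))
    have hsqrt3 : 1 ≤ Real.sqrt 3 := by
      rw [show (1:ℝ) = Real.sqrt 1 by simp]
      exact Real.sqrt_le_sqrt (by norm_num)
    rcases eq_or_lt_of_le hx.1 with h0 | h0
    · rw [← h0, modGS_zero]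
      calc |f 0| ≤ M := hM 0 (by norm_num)
        _ ≤ Real.sqrt 3 * M := le_mul_of_one_le_left hM0 hsqrt3
    · rcases eq_or_lt_of_le hx.2 with h1 | h1
      · rw [h1, modGS_one n hn]
        calc |f 1| ≤ M := hM 1 (by norm_num)
          _ ≤ Real.sqrt 3 * M := le_mul_of_one_le_left hM0 hsqrt3
      · have hxm : x ∈ Set.Ioo (0:ℝ) 1 := ⟨h0, h1⟩
        have hbpos : ∀ k, (0:ℝ) ≤ bern n k x := fun k => bern_nonneg n k h0.le h1.le
        calc |modGS n f x|
            ≤ ∑ k ∈ Finset.range (n+1), |uGS n k f| * (|1 - T n k x / n| * bern n k x) := by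
              unfold modGS
              refine (Finset.abs_sum_le_sum_abs _ _).trans (le_of_eq ?_)
              refine Finset.sum_congr rfl fun k _ => ?_
              rw [abs_mul, abs_mul, abs_of_nonneg (hbpos k)]
          _ ≤ ∑ k ∈ Finset.range (n+1), M * (|1 - T n k x / n| * bern n k x) := by
              refine Finset.sum_le_sum fun k hk => ?_
              have hkn : k ≤ n := by
                have := Finset.mem_range.mp hk; omega
              exact mul_le_mul_of_nonneg_right (uGS_bound n k hkn hn f hf M hM)
                (mul_nonneg (abs_nonneg _) (hbpos k))
          _ = M * ∑ k ∈ Finset.range (n+1), |1 - T n k x / n| * bern n k x := by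
              rw [Finset.mul_sum]
          _ ≤ M * Real.sqrt 3 :=
              mul_le_mul_of_nonneg_left (part1 n hn hxm) hM0
          _ = Real.sqrt 3 * M := mul_comm _ _
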